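/- (Weak (2,2) for the universal maximal function) Let W be any matrix weight on ℝ^d (positive definite a.e., W^{-1} locally integrable), and define M_W' f(x) = sup_{I ∋ x, I dyadic} (1/|I|)∫_I |(m_I(W^{-1}))^{-1/2} W^{-1/2}(y) f(y)| dy. Then M_W' is of weak type (2,2): |{x : M_W' f(x) > λ}| ≲ ‖f‖²_{L²}/λ² for all λ > 0, with implied constant depending only on n and d. -/

import Mathlib

open MeasureTheory Matrix
open scoped ComplexOrder

/-- The operator norm on `n × n` complex matrices induced by the Euclidean norm. -/
noncomputable def matNorm {n : ℕ} (M : Matrix (Fin n) (Fin n) ℂ) : ℝ :=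
  ‖(Matrix.toEuclideanCLM (𝕜 := ℂ) M : EuclideanSpace ℂ (Fin n) →L[ℂ] EuclideanSpace ℂ (Fin n))‖

/-- The Euclidean norm of a vector in `ℂⁿ`. -/
noncomputable def vecNorm {n : ℕ} (v : Fin n → ℂ) : ℝ :=
  ‖(WithLp.equiv 2 (Fin n → ℂ)).symm v‖

/-- A (half-open, axis-parallel) cube in `ℝ^d`. -/
def IsCube {d : ℕ} (I : Set (Fin d → ℝ)) : Prop :=
  ∃ (a : Fin d → ℝ) (ℓ : ℝ), 0 < ℓ ∧ I = Set.univ.pi fun i => Set.Ico (a i) (a i + ℓ)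

/-- The average `(1/|I|) ∫_I g` of a scalar function over a set `I`. -/
noncomputable def avg {d : ℕ} (I : Set (Fin d → ℝ)) (g : (Fin d → ℝ) → ℝ) : ℝ :=
  (volume I).toReal⁻¹ * ∫ x in I, g x

/-- The (entrywise) average of a vector-valued function over a set `I`. -/
noncomputable def vavg {d n : ℕ} (I : Set (Fin d → ℝ)) (f : (Fin d → ℝ) → Fin n → ℂ) :
    Fin n → ℂ :=
  fun i => (volume I).toReal⁻¹ • (∫ x in I, f x i)

/-- The (entrywise) average of a matrix-valued function over a set `I`. -/
noncomputable def mavg {d n : ℕ} (I : Set (Fin d → ℝ))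
    (F : (Fin d → ℝ) → Matrix (Fin n) (Fin n) ℂ) : Matrix (Fin n) (Fin n) ℂ :=
  Matrix.of fun i j => (volume I).toReal⁻¹ • (∫ x in I, F x i j)
open scoped ENNReal

/-- The dyadic cube of generation `k` indexed by `m ∈ ℤ^d`. -/
def dCube (d : ℕ) (I : ℤ × (Fin d → ℤ)) : Set (Fin d → ℝ) :=
  Set.univ.pi fun i =>
    Set.Ico ((I.2 i : ℝ) * (2 : ℝ) ^ (-I.1)) (((I.2 i : ℝ) + 1) * (2 : ℝ) ^ (-I.1))

/-- The Euclidean norm of a vector of `ℂⁿ`, valued in `ℝ≥0∞`. -/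
noncomputable def vecENorm {n : ℕ} (v : Fin n → ℂ) : ℝ≥0∞ := ENNReal.ofReal (vecNorm v)

/-- The auxiliary weighted maximal function
`M_W' f(x) = sup_{I ∋ x} (1/|I|) ∫_I |(m_I(W^{-1}))^{-1/2} W^{-1/2}(y) f(y)| dy`,
the supremum over dyadic cubes; `R I` plays the role of `(m_I(W^{-1}))^{-1/2}` and
`Winvhalf` that of `W^{-1/2}`. -/
noncomputable def MWaux {d n : ℕ} (R : ℤ × (Fin d → ℤ) → Matrix (Fin n) (Fin n) ℂ)
    (Winvhalf : (Fin d → ℝ) → Matrix (Fin n) (Fin n) ℂ)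
    (f : (Fin d → ℝ) → Fin n → ℂ) (x : Fin d → ℝ) : ℝ≥0∞ :=
  ⨆ (I : ℤ × (Fin d → ℤ)) (_ : x ∈ dCube d I),
    (volume (dCube d I))⁻¹ *
      ∫⁻ y in dCube d I, vecENorm ((R I).mulVec ((Winvhalf y).mulVec (f y)))

/-- The unweighted dyadic Hardy–Littlewood maximal function. -/
noncomputable def dyadicMax {d : ℕ} (g : (Fin d → ℝ) → ℝ≥0∞) (x : Fin d → ℝ) : ℝ≥0∞ :=
  ⨆ (I : ℤ × (Fin d → ℤ)) (_ : x ∈ dCube d I),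
    (volume (dCube d I))⁻¹ * ∫⁻ y in dCube d I, g y


lemma vecNorm_eq {n : ℕ} (v : Fin n → ℂ) : vecNorm v = Real.sqrt (∑ i, ‖v i‖ ^ 2) := by
  rw [vecNorm, EuclideanSpace.norm_eq]
  simp [WithLp.equiv_symm_apply]

lemma vecNorm_nonneg {n : ℕ} (v : Fin n → ℂ) : 0 ≤ vecNorm v := norm_nonneg _

lemma vecNorm_mulVec_le {n : ℕ} (A : Matrix (Fin n) (Fin n) ℂ) (v : Fin n → ℂ) :
    vecNorm (A.mulVec v) ≤ Real.sqrt (∑ i, ∑ j, ‖A i j‖ ^ 2) * vecNorm v := by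
  rw [vecNorm_eq, vecNorm_eq, ← Real.sqrt_mul (by positivity)]
  apply Real.sqrt_le_sqrt
  rw [Finset.sum_mul]
  apply Finset.sum_le_sum
  intro i _
  calc ‖A.mulVec v i‖ ^ 2 ≤ (∑ j, ‖A i j‖ * ‖v j‖) ^ 2 := by
        apply pow_le_pow_left₀ (norm_nonneg _)
        rw [Matrix.mulVec, dotProduct]
        exact (norm_sum_le _ _).trans (by simp [norm_mul])
    _ ≤ (∑ j, ‖A i j‖ ^ 2) * ∑ j, ‖v j‖ ^ 2 := Finset.sum_mul_sq_le_sq_mul_sq _ _ _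
lemma trace_mul_conjTranspose_re (B : Matrix (Fin n) (Fin n) ℂ) :
    (Matrix.trace (B * Bᴴ)).re = ∑ i, ∑ j, ‖B i j‖ ^ 2 := by
  simp only [Matrix.trace, Matrix.diag, Matrix.mul_apply, Matrix.conjTranspose_apply,
    Complex.re_sum, Complex.mul_conj']
  simp [← Complex.ofReal_pow, Complex.sq_norm, Complex.normSq_apply]

lemma trace_RMR (R M : Matrix (Fin n) (Fin n) ℂ) :
    Matrix.trace (R * M * R) = ∑ k, ∑ l, M k l * (R * R) l k := by
  rw [Matrix.trace_mul_cycle]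
  simp only [Matrix.trace, Matrix.diag, Matrix.mul_apply, Finset.mul_sum, Finset.sum_mul]
  rw [Finset.sum_comm]
  congr 1; ext k; congr 1; ext l; congr 1; ext i; ring

lemma mem_dCube {d : ℕ} {I : ℤ × (Fin d → ℤ)} {x : Fin d → ℝ} :
    x ∈ dCube d I ↔ ∀ i, (I.2 i : ℝ) * (2:ℝ) ^ (-I.1) ≤ x i ∧
      x i < ((I.2 i : ℝ) + 1) * (2:ℝ) ^ (-I.1) := by
  simp [dCube, Set.mem_pi]

lemma measurableSet_dCube {d : ℕ} (I : ℤ × (Fin d → ℤ)) : MeasurableSet (dCube d I) :=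
  MeasurableSet.univ_pi fun _ => measurableSet_Ico

lemma volume_dCube {d : ℕ} (I : ℤ × (Fin d → ℤ)) :
    volume (dCube d I) = ENNReal.ofReal ((2:ℝ) ^ (-I.1)) ^ d := by
  rw [dCube, volume_pi_pi]
  calc ∏ i : Fin d, volume (Set.Ico ((I.2 i : ℝ) * (2:ℝ)^(-I.1)) (((I.2 i : ℝ)+1) * (2:ℝ)^(-I.1)))
      = ∏ _i : Fin d, ENNReal.ofReal ((2:ℝ) ^ (-I.1)) :=
        Finset.prod_congr rfl (fun i _ => by rw [Real.volume_Ico]; congr 1; ring)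
    _ = ENNReal.ofReal ((2:ℝ) ^ (-I.1)) ^ d := by simp

lemma volume_dCube_pos {d : ℕ} (I : ℤ × (Fin d → ℤ)) : 0 < volume (dCube d I) := by
  rw [volume_dCube]
  have : (0:ℝ≥0∞) < ENNReal.ofReal ((2:ℝ) ^ (-I.1)) := by
    rw [ENNReal.ofReal_pos]; positivity
  exact ENNReal.pow_pos this d

lemma volume_dCube_ne_top {d : ℕ} (I : ℤ × (Fin d → ℤ)) : volume (dCube d I) ≠ ⊤ := by
  rw [volume_dCube]
  exact ENNReal.pow_ne_top ENNReal.ofReal_ne_top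

lemma dyadic_step {d : ℕ} {I J : ℤ × (Fin d → ℤ)} (hk : J.1 ≤ I.1) :
    ∃ e : ℤ, 1 ≤ e ∧ (e : ℝ) * (2:ℝ) ^ (-I.1) = (2:ℝ) ^ (-J.1) := by
  refine ⟨2 ^ (I.1 - J.1).toNat, one_le_pow₀ (by norm_num), ?_⟩
  have h1 : (((2:ℤ) ^ (I.1 - J.1).toNat : ℤ) : ℝ) = (2:ℝ) ^ (I.1 - J.1) := by
    push_cast
    rw [← zpow_natCast, Int.toNat_of_nonneg (by omega)]
  rw [h1, ← zpow_add₀ (two_ne_zero)]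
  congr 1; omega

lemma dCube_subset_of_not_disjoint {d : ℕ} {I J : ℤ × (Fin d → ℤ)} (hk : J.1 ≤ I.1)
    (hnd : ¬ Disjoint (dCube d I) (dCube d J)) : dCube d I ⊆ dCube d J := by
  obtain ⟨e, he, hee⟩ := dyadic_step hk
  obtain ⟨x, hxI, hxJ⟩ := Set.not_disjoint_iff.1 hnd
  set h : ℝ := (2:ℝ) ^ (-I.1) with hdef
  have hh : 0 < h := by positivity
  rw [mem_dCube] at hxI hxJ
  intro y hy
  rw [mem_dCube] at hy ⊢
  intro i
  obtain ⟨h1, h2⟩ := hxI i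
  obtain ⟨h3, h4⟩ := hxJ i
  rw [← hee] at h3 h4 ⊢
  set p : ℤ := I.2 i
  set q : ℤ := J.2 i
  have key1 : q * e ≤ p := by
    have : (q:ℝ) * ((e:ℝ) * h) < ((p:ℝ) + 1) * h := lt_of_le_of_lt h3 h2
    have : (q:ℝ) * (e:ℝ) < (p:ℝ) + 1 := by
      have := (fun H => lt_of_mul_lt_mul_right H hh.le) (by linarith : ((q:ℝ) * (e:ℝ)) * h < ((p:ℝ)+1) * h)
      linarith
    have : q * e < p + 1 := by exact_mod_cast this
    omega
  have key2 : p + 1 ≤ (q + 1) * e := by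
    have : (p:ℝ) * h < ((q:ℝ) + 1) * ((e:ℝ) * h) := lt_of_le_of_lt h1 h4
    have : (p:ℝ) < ((q:ℝ) + 1) * (e:ℝ) := by
      have := (fun H => lt_of_mul_lt_mul_right H hh.le) (by linarith : (p:ℝ) * h < (((q:ℝ)+1) * (e:ℝ)) * h)
      linarith
    have : p < (q + 1) * e := by exact_mod_cast this
    omega
  obtain ⟨g1, g2⟩ := hy i
  constructor
  · calc (q:ℝ) * ((e:ℝ) * h) = ((q * e : ℤ) : ℝ) * h := by push_cast; ring
      _ ≤ (p:ℝ) * h := by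
          have : ((q * e : ℤ) : ℝ) ≤ (p:ℝ) := by exact_mod_cast key1
          nlinarith
      _ ≤ y i := g1
  · calc y i < ((p:ℝ) + 1) * h := g2
      _ = ((p + 1 : ℤ) : ℝ) * h := by push_cast; ring
      _ ≤ (((q + 1) * e : ℤ) : ℝ) * h := by
          have : ((p + 1 : ℤ) : ℝ) ≤ (((q+1) * e : ℤ) : ℝ) := by exact_mod_cast key2
          nlinarith
      _ = ((q:ℝ) + 1) * ((e:ℝ) * h) := by push_cast; ring

lemma dCube_corner_mem {d : ℕ} (I : ℤ × (Fin d → ℤ)) :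
    (fun i => (I.2 i : ℝ) * (2:ℝ) ^ (-I.1)) ∈ dCube d I := by
  rw [mem_dCube]
  intro i
  have hh : (0:ℝ) < (2:ℝ) ^ (-I.1) := by positivity
  exact ⟨le_refl _, by nlinarith⟩

lemma dCube_eq_of_same_gen {d : ℕ} {I J : ℤ × (Fin d → ℤ)} (hk : I.1 = J.1)
    (hnd : ¬ Disjoint (dCube d I) (dCube d J)) : I = J := by
  have hIJ := dCube_subset_of_not_disjoint (le_of_eq hk.symm) hnd
  have hJI := dCube_subset_of_not_disjoint (le_of_eq hk) (fun h => hnd h.symm)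
  have hcI := hIJ (dCube_corner_mem I)
  have hcJ := hJI (dCube_corner_mem J)
  rw [mem_dCube] at hcI hcJ
  have hh : (0:ℝ) < (2:ℝ) ^ (-I.1) := by positivity
  refine Prod.ext hk (funext fun i => ?_)
  obtain ⟨a1, a2⟩ := hcI i
  obtain ⟨b1, b2⟩ := hcJ i
  rw [← hk] at a1 a2 b1 b2
  have e1 : (J.2 i : ℝ) ≤ I.2 i := le_of_mul_le_mul_right a1 hh
  have e2 : (I.2 i : ℝ) ≤ J.2 i := le_of_mul_le_mul_right b1 hh
  have : (I.2 i : ℝ) = J.2 i := le_antisymm e2 e1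
  exact_mod_cast this

lemma gen_bdd {d : ℕ} (hd : 0 < d) {C : ℝ≥0∞} (hC : C ≠ ⊤) :
    ∃ k₀ : ℤ, ∀ I : ℤ × (Fin d → ℤ), volume (dCube d I) ≤ C → k₀ ≤ I.1 := by
  obtain ⟨N, hN⟩ := ENNReal.exists_nat_gt hC
  refine ⟨-(N:ℤ), fun I hI => ?_⟩
  by_contra hlt
  push_neg at hlt
  have hN2 : (N:ℝ) ≤ (2:ℝ) ^ (-I.1) := by
    calc (N:ℝ) ≤ 2 ^ N := by exact_mod_cast (Nat.lt_two_pow_self (n := N)).le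
      _ = (2:ℝ) ^ (N:ℤ) := by rw [zpow_natCast]
      _ ≤ (2:ℝ) ^ (-I.1) := by
          apply zpow_le_zpow_right₀ one_le_two
          omega
  have h1 : C < ENNReal.ofReal ((2:ℝ) ^ (-I.1)) := by
    calc C < (N:ℝ≥0∞) := hN
      _ = ENNReal.ofReal (N:ℝ) := by simp [ENNReal.ofReal_natCast]
      _ ≤ ENNReal.ofReal ((2:ℝ) ^ (-I.1)) := ENNReal.ofReal_le_ofReal hN2
  have h2 : ENNReal.ofReal ((2:ℝ) ^ (-I.1)) ≤ volume (dCube d I) := by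
    rw [volume_dCube]
    apply le_self_pow₀ _ hd.ne'
    rw [ENNReal.one_le_ofReal]
    calc (1:ℝ) = (2:ℝ) ^ (0:ℤ) := by norm_num
      _ ≤ (2:ℝ) ^ (-I.1) := zpow_le_zpow_right₀ one_le_two (by omega)
  exact absurd (h1.trans_le h2) (not_lt.2 hI)

lemma exists_maximal_cubes {d : ℕ} {Bad : Set (ℤ × (Fin d → ℤ))} {k₀ : ℤ}
    (hbd : ∀ I ∈ Bad, k₀ ≤ I.1) :
    ∃ M : Set (ℤ × (Fin d → ℤ)), M ⊆ Bad ∧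
      (∀ I ∈ Bad, ∃ J ∈ M, dCube d I ⊆ dCube d J) ∧
      M.Pairwise fun J J' => Disjoint (dCube d J) (dCube d J') := by
  classical
  refine ⟨{J | J ∈ Bad ∧ ∀ J' ∈ Bad, J'.1 < J.1 → Disjoint (dCube d J) (dCube d J')},
    fun J hJ => hJ.1, ?_, ?_⟩
  · intro I hI
    set P : ℤ → Prop := fun k => ∃ m, (k, m) ∈ Bad ∧ dCube d I ⊆ dCube d (k, m) with hP
    have hinh : ∃ z, P z := ⟨I.1, I.2, by simpa using hI, subset_of_eq (by simp)⟩
    have hbdd : ∃ b, ∀ z, P z → b ≤ z := ⟨k₀, fun z ⟨m, hm, _⟩ => hbd _ hm⟩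
    obtain ⟨k, ⟨m, hmB, hmS⟩, hleast⟩ := Int.exists_least_of_bdd hbdd hinh
    refine ⟨(k, m), ⟨hmB, ?_⟩, hmS⟩
    intro J' hJ' hlt
    by_contra hnd
    have hsub : dCube d (k, m) ⊆ dCube d J' :=
      dCube_subset_of_not_disjoint (le_of_lt hlt) hnd
    have : P J'.1 := ⟨J'.2, by simpa using hJ', hmS.trans hsub⟩
    exact absurd (hleast _ this) (by omega)
  · intro J hJ J' hJ' hne
    rcases lt_trichotomy J.1 J'.1 with h | h | h
    · exact (hJ'.2 J hJ.1 h).symm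
    · by_contra hnd
      exact hne (dCube_eq_of_same_gen h hnd)
    · exact hJ.2 J' hJ'.1 h

lemma integral_hfun {d n : ℕ} {I : Set (Fin d → ℝ)}
    (hvol : volume I ≠ 0) (hvolt : volume I ≠ ⊤)
    (Winv : (Fin d → ℝ) → Matrix (Fin n) (Fin n) ℂ)
    (hint : ∀ k l, IntegrableOn (fun x => Winv x k l) I volume)
    (Q : Matrix (Fin n) (Fin n) ℂ)
    (hQ : Q = (mavg I Winv)⁻¹) (hdet : IsUnit (mavg I Winv).det) :
    ∫ y in I, (∑ k, ∑ l, (Winv y k l * Q l k).re) = (volume I).toReal * n := by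
  have ht : (volume I).toReal ≠ 0 := by
    simp [ENNReal.toReal_ne_zero, hvol, hvolt]
  have hI1 : ∀ k l : Fin n, IntegrableOn (fun y => (Winv y k l * Q l k).re) I volume :=
    fun k l => ((hint k l).mul_const _).re
  have hstep : ∫ y in I, (∑ k, ∑ l, (Winv y k l * Q l k).re)
      = ∑ k, ∑ l, ∫ y in I, (Winv y k l * Q l k).re := by
    rw [integral_finset_sum _ (fun k _ => integrable_finset_sum _ (fun l _ => hI1 k l))]
    exact Finset.sum_congr rfl fun k _ => integral_finset_sum _ (fun l _ => hI1 k l)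
  have hone : ∀ k l : Fin n, ∫ y in I, (Winv y k l * Q l k).re
      = (volume I).toReal * (mavg I Winv k l * Q l k).re := by
    intro k l
    have hre := integral_re (μ := volume.restrict I) ((hint k l).mul_const (Q l k))
    simp only [RCLike.re_to_complex] at hre
    rw [hre, integral_mul_const]
    have : (∫ y in I, Winv y k l) = (volume I).toReal • mavg I Winv k l := by
      show (∫ y in I, Winv y k l) = (volume I).toReal • ((volume I).toReal⁻¹ • ∫ x in I, Winv x k l)
      rw [smul_smul, mul_inv_cancel₀ ht, one_smul]
    rw [this]
    simp [Complex.real_smul, mul_assoc]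
  rw [hstep]
  simp only [hone, ← Finset.mul_sum]
  congr 1
  have htr : Matrix.trace (mavg I Winv * Q) = ∑ k, ∑ l, mavg I Winv k l * Q l k := by
    simp [Matrix.trace, Matrix.diag, Matrix.mul_apply]
  have : mavg I Winv * Q = 1 := by rw [hQ]; exact Matrix.mul_nonsing_inv _ hdet
  have h2 : (∑ k, ∑ l, mavg I Winv k l * Q l k) = (n : ℂ) := by
    rw [← htr, this, Matrix.trace_one]
    simp
  calc (∑ k, ∑ l : Fin n, (mavg I Winv k l * Q l k).re)
      = (∑ k, ∑ l, mavg I Winv k l * Q l k).re := by simp [Complex.re_sum]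
    _ = (n : ℝ) := by rw [h2]; simp

lemma measurable_vecENorm {n d : ℕ} {f : (Fin d → ℝ) → Fin n → ℂ}
    (hf : ∀ i, Measurable fun x => f x i) : Measurable fun x => vecENorm (f x) := by
  simp only [vecENorm, vecNorm_eq]
  apply ENNReal.measurable_ofReal.comp
  apply Real.continuous_sqrt.measurable.comp
  exact Finset.measurable_sum _ fun i _ => ((hf i).norm.pow_const 2)

lemma heavy_cube {d n : ℕ} (hn : 0 < n)
    (W Winvhalf : (Fin d → ℝ) → Matrix (Fin n) (Fin n) ℂ)
    (hWh : ∀ x, (Winvhalf x).PosDef ∧ Winvhalf x * Winvhalf x = (W x)⁻¹)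
    (R : ℤ × (Fin d → ℤ) → Matrix (Fin n) (Fin n) ℂ)
    (hR : ∀ I, (R I).PosDef ∧ R I * R I = (mavg (dCube d I) fun y => (W y)⁻¹)⁻¹)
    (hint : ∀ I i j, IntegrableOn (fun x => (W x)⁻¹ i j) (dCube d I) volume)
    (f : (Fin d → ℝ) → Fin n → ℂ) (hf : ∀ i, Measurable fun x => f x i)
    (lam : ℝ≥0∞) (I : ℤ × (Fin d → ℤ))
    (hbad : lam < (volume (dCube d I))⁻¹ *
      ∫⁻ y in dCube d I, vecENorm ((R I).mulVec ((Winvhalf y).mulVec (f y)))) :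
    lam ^ (2 : ℕ) * volume (dCube d I) ≤
      (n : ℝ≥0∞) * ∫⁻ y in dCube d I, vecENorm (f y) ^ (2 : ℕ) := by
  classical
  set C := dCube d I with hC
  set μI := volume C with hμdef
  have hμ0 : μI ≠ 0 := (volume_dCube_pos I).ne'
  have hμt : μI ≠ ⊤ := volume_dCube_ne_top I
  set Q := R I * R I with hQdef
  have hdet : IsUnit (mavg C fun y => (W y)⁻¹).det := by
    by_contra hd
    have h0 : (mavg C (fun y => (W y)⁻¹))⁻¹ = 0 := Matrix.nonsing_inv_apply_not_isUnit _ hd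
    have hz : R I * R I = 0 := by rw [(hR I).2, ← hC, h0]
    have hdetR : (R I).det ≠ 0 := (hR I).1.det_pos.ne'
    have hz2 : (R I * R I).det = 0 := by rw [hz]; haveI : Nonempty (Fin n) := ⟨⟨0, hn⟩⟩; exact Matrix.det_zero
    rw [Matrix.det_mul] at hz2
    exact (mul_ne_zero hdetR hdetR) hz2
  set hfun : (Fin d → ℝ) → ℝ := fun y => ∑ k, ∑ l, ((W y)⁻¹ k l * Q l k).re with hhfun
  have hkey : ∀ y, hfun y = ∑ i, ∑ j, ‖(R I * Winvhalf y) i j‖ ^ 2 := by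
    intro y
    have hM : (Winvhalf y)ᴴ = Winvhalf y := (hWh y).1.1
    have hRh : (R I)ᴴ = R I := (hR I).1.1
    have hBB : (R I * Winvhalf y) * (R I * Winvhalf y)ᴴ = R I * (W y)⁻¹ * R I := by
      rw [Matrix.conjTranspose_mul, hM, hRh, ← (hWh y).2]
      simp only [Matrix.mul_assoc]
    calc hfun y = (∑ k, ∑ l, (W y)⁻¹ k l * Q l k).re := by simp [hhfun, Complex.re_sum]
      _ = (Matrix.trace (R I * (W y)⁻¹ * R I)).re := by rw [trace_RMR]
      _ = (Matrix.trace ((R I * Winvhalf y) * (R I * Winvhalf y)ᴴ)).re := by rw [hBB]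
      _ = ∑ i, ∑ j, ‖(R I * Winvhalf y) i j‖ ^ 2 := trace_mul_conjTranspose_re _
  have hnn : ∀ y, 0 ≤ hfun y := fun y => by rw [hkey]; positivity
  set g : (Fin d → ℝ) → ℝ≥0∞ := fun y => ENNReal.ofReal (Real.sqrt (hfun y)) with hg
  set e : (Fin d → ℝ) → ℝ≥0∞ := fun y => vecENorm (f y) with he
  have hpt : ∀ y, vecENorm ((R I).mulVec ((Winvhalf y).mulVec (f y))) ≤ g y * e y := by
    intro y
    rw [Matrix.mulVec_mulVec]
    simp only [hg, he, vecENorm]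
    rw [← ENNReal.ofReal_mul (Real.sqrt_nonneg _)]
    apply ENNReal.ofReal_le_ofReal
    calc vecNorm ((R I * Winvhalf y).mulVec (f y))
        ≤ Real.sqrt (∑ i, ∑ j, ‖(R I * Winvhalf y) i j‖ ^ 2) * vecNorm (f y) :=
          vecNorm_mulVec_le _ _
      _ = Real.sqrt (hfun y) * vecNorm (f y) := by rw [hkey]
  have hmg : AEMeasurable g (volume.restrict C) := by
    apply ENNReal.measurable_ofReal.comp_aemeasurable
    apply Real.continuous_sqrt.measurable.comp_aemeasurable
    apply Finset.aemeasurable_fun_sum _ fun k _ => ?_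
    apply Finset.aemeasurable_fun_sum _ fun l _ => ?_
    exact Complex.measurable_re.comp_aemeasurable
      (((hint I k l).aestronglyMeasurable.aemeasurable).mul_const _)
  have hme : Measurable e := measurable_vecENorm hf
  have hconj : Real.HolderConjugate 2 2 := Real.HolderConjugate.two_two
  have hcs : (∫⁻ y in C, (g * e) y) ≤
      (∫⁻ y in C, g y ^ (2:ℝ)) ^ (1/2:ℝ) * (∫⁻ y in C, e y ^ (2:ℝ)) ^ (1/2:ℝ) :=
    ENNReal.lintegral_mul_le_Lp_mul_Lq _ hconj hmg hme.aemeasurable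
  have hintfun : IntegrableOn hfun C volume := by
    apply integrable_finset_sum _ fun k _ => ?_
    apply integrable_finset_sum _ fun l _ => ?_
    exact ((hint I k l).mul_const _).re
  have hg2 : ∀ y, g y ^ (2:ℝ) = ENNReal.ofReal (hfun y) := by
    intro y
    rw [hg, ENNReal.ofReal_rpow_of_nonneg (Real.sqrt_nonneg _) (by norm_num)]
    congr 1
    rw [show (2:ℝ) = ((2:ℕ):ℝ) by norm_num, Real.rpow_natCast, sq,
      Real.mul_self_sqrt (hnn y)]
  have hintg2 : (∫⁻ y in C, g y ^ (2:ℝ)) = μI * n := by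
    simp only [hg2]
    rw [← ofReal_integral_eq_lintegral_ofReal hintfun (ae_of_all _ hnn)]
    rw [integral_hfun hμ0 hμt _ (hint I) Q ((hR I).2) hdet]
    rw [ENNReal.ofReal_mul ENNReal.toReal_nonneg, ENNReal.ofReal_toReal hμt,
      ENNReal.ofReal_natCast]
  set S := ∫⁻ y in C, e y ^ (2:ℕ) with hSdef
  have he2 : (∫⁻ y in C, e y ^ (2:ℝ)) = S := by
    rw [hSdef]
    congr 1
    ext y
    rw [← ENNReal.rpow_natCast]
    norm_num
  have hlamle : lam ≤ μI⁻¹ * ((μI * n) ^ (1/2:ℝ) * S ^ (1/2:ℝ)) := by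
    refine hbad.le.trans ?_
    apply mul_le_mul_right
    calc (∫⁻ y in C, vecENorm ((R I).mulVec ((Winvhalf y).mulVec (f y))))
        ≤ ∫⁻ y in C, (g * e) y := lintegral_mono fun y => hpt y
      _ ≤ (∫⁻ y in C, g y ^ (2:ℝ)) ^ (1/2:ℝ) * (∫⁻ y in C, e y ^ (2:ℝ)) ^ (1/2:ℝ) := hcs
      _ = (μI * n) ^ (1/2:ℝ) * S ^ (1/2:ℝ) := by rw [hintg2, he2]
  have hhalf : ∀ x : ℝ≥0∞, (x ^ (1/2:ℝ)) ^ (2:ℕ) = x := by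
    intro x
    rw [← ENNReal.rpow_natCast (x ^ (1/2:ℝ)) 2, ← ENNReal.rpow_mul]
    norm_num
  have hsq : lam ^ (2:ℕ) ≤ (μI⁻¹) ^ (2:ℕ) * ((μI * n) * S) := by
    calc lam ^ (2:ℕ) ≤ (μI⁻¹ * ((μI * n) ^ (1/2:ℝ) * S ^ (1/2:ℝ))) ^ (2:ℕ) := by
          exact pow_le_pow_left' hlamle 2
      _ = (μI⁻¹) ^ (2:ℕ) * (((μI * n) ^ (1/2:ℝ)) ^ (2:ℕ) * ((S ^ (1/2:ℝ)) ^ (2:ℕ))) := by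
          rw [mul_pow, mul_pow]
      _ = (μI⁻¹) ^ (2:ℕ) * ((μI * n) * S) := by rw [hhalf, hhalf]
  have hcan : μI⁻¹ * μI = 1 := ENNReal.inv_mul_cancel hμ0 hμt
  calc lam ^ (2:ℕ) * μI ≤ ((μI⁻¹) ^ (2:ℕ) * ((μI * n) * S)) * μI :=
        mul_le_mul_left hsq μI
    _ = (μI⁻¹ * μI) * (μI⁻¹ * μI) * ((n:ℝ≥0∞) * S) := by ring
    _ = (n:ℝ≥0∞) * S := by rw [hcan]; ring

/-- Weak (2,2) bound for the universal maximal function: for *any* matrix weight `W`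
(positive definite, with `W⁻¹` locally integrable), the maximal function
`M_W' f(x) = sup_{I ∋ x} (1/|I|)∫_I |(m_I(W^{-1}))^{-1/2} W^{-1/2}(y) f(y)| dy` satisfies
`|{x : M_W' f(x) > λ}| ≲ ‖f‖²_{L²} / λ²`, with constant depending only on `n`, `d`.
Here `Winvhalf = W^{-1/2}` and `R I = (m_I(W⁻¹))^{-1/2}`. -/
theorem stmt12 {d n : ℕ} :
    ∃ c : ℝ, 0 < c ∧
      ∀ (W Winvhalf : (Fin d → ℝ) → Matrix (Fin n) (Fin n) ℂ),
        (∀ x, (W x).PosDef) →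
        (∀ x, (Winvhalf x).PosDef ∧ Winvhalf x * Winvhalf x = (W x)⁻¹) →
      ∀ R : ℤ × (Fin d → ℤ) → Matrix (Fin n) (Fin n) ℂ,
        (∀ I, (R I).PosDef ∧ R I * R I = (mavg (dCube d I) fun y => (W y)⁻¹)⁻¹) →
      (∀ I i j, IntegrableOn (fun x => (W x)⁻¹ i j) (dCube d I) volume) →
      ∀ f : (Fin d → ℝ) → Fin n → ℂ, (∀ i, Measurable fun x => f x i) →
      ∀ lam : ℝ≥0∞, 0 < lam →
        volume {x | lam < MWaux R Winvhalf f x}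
          ≤ (ENNReal.ofReal c / lam ^ (2 : ℕ)) * ∫⁻ x, vecENorm (f x) ^ (2 : ℕ) := by
  classical
  refine ⟨(n : ℝ) + 1, by positivity, ?_⟩
  intro W Winvhalf hW hWh R hR hint f hf lam hlam
  set F : (Fin d → ℝ) → ℝ≥0∞ := fun x => vecENorm (f x) ^ (2 : ℕ) with hF
  set T := ∫⁻ x, F x with hT
  by_cases hlamtop : lam = ⊤
  · have hemp : {x | lam < MWaux R Winvhalf f x} = ∅ := by
      ext x; simp [hlamtop]
    rw [hemp]; simp
  by_cases hTtop : T = ⊤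
  · have hne0 : ENNReal.ofReal ((n:ℝ)+1) / lam ^ (2:ℕ) ≠ 0 := by
      rw [div_eq_mul_inv]
      apply mul_ne_zero
      · simp [ENNReal.ofReal_eq_zero]; positivity
      · rw [ENNReal.inv_ne_zero]
        exact ENNReal.pow_ne_top hlamtop
    calc volume {x | lam < MWaux R Winvhalf f x} ≤ ⊤ := le_top
      _ ≤ ENNReal.ofReal ((n:ℝ)+1) / lam ^ (2:ℕ) * T := by
          rw [hTtop, ENNReal.mul_top hne0]
  by_cases hn : n = 0
  · have hz : ∀ (v : Fin n → ℂ), vecENorm v = 0 := by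
      intro v
      rw [vecENorm, vecNorm_eq]
      subst hn
      simp
    have hM : ∀ x, MWaux R Winvhalf f x = 0 := by
      intro x
      simp [MWaux, hz]
    have hemp : {x | lam < MWaux R Winvhalf f x} = ∅ := by
      ext x
      simp [hM x]
    rw [hemp]; simp
  have hn' : 0 < n := Nat.pos_of_ne_zero hn
  have h2 : lam ^ (2:ℕ) ≠ 0 := pow_ne_zero _ hlam.ne'
  have h2t : lam ^ (2:ℕ) ≠ ⊤ := ENNReal.pow_ne_top hlamtop
  set Bad : Set (ℤ × (Fin d → ℤ)) :=
    {I | lam ^ (2:ℕ) * volume (dCube d I) ≤ (n:ℝ≥0∞) * ∫⁻ y in dCube d I, F y} with hBad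
  have hcover : {x | lam < MWaux R Winvhalf f x} ⊆ ⋃ J ∈ Bad, dCube d J := by
    intro x hx
    simp only [Set.mem_setOf_eq, MWaux, lt_iSup_iff] at hx
    obtain ⟨I, hxI, hI⟩ := hx
    apply Set.mem_biUnion _ hxI
    exact heavy_cube hn' W Winvhalf hWh R hR hint f hf lam I hI
  have hvol : ∀ J ∈ Bad, volume (dCube d J) ≤
      (lam ^ (2:ℕ))⁻¹ * ((n:ℝ≥0∞) * ∫⁻ y in dCube d J, F y) := by
    intro J hJ
    calc volume (dCube d J) = (lam ^ (2:ℕ))⁻¹ * (lam ^ (2:ℕ) * volume (dCube d J)) := by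
          rw [← mul_assoc, ENNReal.inv_mul_cancel h2 h2t, one_mul]
      _ ≤ _ := mul_le_mul_right hJ _
  have hnle : (n:ℝ≥0∞) ≤ ENNReal.ofReal ((n:ℝ)+1) := by
    rw [← ENNReal.ofReal_natCast n]
    exact ENNReal.ofReal_le_ofReal (by linarith)
  have hfinal : (lam ^ (2:ℕ))⁻¹ * ((n:ℝ≥0∞) * T) ≤
      ENNReal.ofReal ((n:ℝ)+1) / lam ^ (2:ℕ) * T := by
    rw [div_eq_mul_inv]
    calc (lam ^ (2:ℕ))⁻¹ * ((n:ℝ≥0∞) * T)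
        = (n:ℝ≥0∞) * (lam ^ (2:ℕ))⁻¹ * T := by ring
      _ ≤ ENNReal.ofReal ((n:ℝ)+1) * (lam ^ (2:ℕ))⁻¹ * T := by gcongr
  by_cases hd : d = 0
  · subst hd
    rcases Set.eq_empty_or_nonempty {x | lam < MWaux R Winvhalf f x} with hemp | ⟨x, hx⟩
    · rw [hemp]; simp
    · obtain ⟨J, hJ, _⟩ := Set.mem_iUnion₂.1 (hcover hx)
      have huniv : dCube 0 J = Set.univ := by
        ext z
        refine ⟨fun _ => trivial, fun _ => ?_⟩
        rw [mem_dCube]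
        exact fun i => i.elim0
      calc volume {x | lam < MWaux R Winvhalf f x} ≤ volume (dCube 0 J) := by
            rw [huniv]; exact measure_mono (Set.subset_univ _)
        _ ≤ (lam ^ (2:ℕ))⁻¹ * ((n:ℝ≥0∞) * ∫⁻ y in dCube 0 J, F y) := hvol J hJ
        _ ≤ (lam ^ (2:ℕ))⁻¹ * ((n:ℝ≥0∞) * T) := by
            gcongr
            rw [hT]
            exact setLIntegral_le_lintegral _ _
        _ ≤ _ := hfinal
  · have hdp : 0 < d := Nat.pos_of_ne_zero hd
    have hCne : (lam ^ (2:ℕ))⁻¹ * ((n:ℝ≥0∞) * T) ≠ ⊤ := by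
      apply ENNReal.mul_ne_top
      · rw [ENNReal.inv_ne_top]; exact h2
      · exact ENNReal.mul_ne_top (ENNReal.natCast_ne_top n) hTtop
    obtain ⟨k₀, hk₀⟩ := gen_bdd hdp hCne
    have hbd : ∀ J ∈ Bad, k₀ ≤ J.1 := by
      intro J hJ
      apply hk₀
      refine (hvol J hJ).trans ?_
      gcongr
      rw [hT]
      exact setLIntegral_le_lintegral _ _
    obtain ⟨M, hMB, hMcov, hMdisj⟩ := exists_maximal_cubes hbd
    have hcover2 : {x | lam < MWaux R Winvhalf f x} ⊆ ⋃ J ∈ M, dCube d J := by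
      intro x hx
      obtain ⟨I, hI, hxI⟩ := Set.mem_iUnion₂.1 (hcover hx)
      obtain ⟨J, hJM, hsub⟩ := hMcov I hI
      exact Set.mem_biUnion hJM (hsub hxI)
    calc volume {x | lam < MWaux R Winvhalf f x}
        ≤ volume (⋃ J ∈ M, dCube d J) := measure_mono hcover2
      _ ≤ ∑' J : M, volume (dCube d J.1) := measure_biUnion_le volume (Set.to_countable M) _
      _ ≤ ∑' J : M, (lam ^ (2:ℕ))⁻¹ * ((n:ℝ≥0∞) * ∫⁻ y in dCube d J.1, F y) :=
          ENNReal.tsum_le_tsum (fun J => hvol J.1 (hMB J.2))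
      _ = (lam ^ (2:ℕ))⁻¹ * ((n:ℝ≥0∞) * ∑' J : M, ∫⁻ y in dCube d J.1, F y) := by
          rw [ENNReal.tsum_mul_left, ENNReal.tsum_mul_left]
      _ ≤ (lam ^ (2:ℕ))⁻¹ * ((n:ℝ≥0∞) * T) := by
          gcongr
          rw [← lintegral_biUnion (Set.to_countable M)
            (fun J _ => measurableSet_dCube J) hMdisj F, hT]
          exact setLIntegral_le_lintegral _ _
      _ ≤ _ := hfinal
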